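/- The map ζ is a coalgebra morphism from H ⊗ A to A ⊗ H: Δ_{A⊗H} ∘ ζ = (ζ ⊗ ζ) ∘ Δ_{H⊗A} as maps H ⊗ A → (A ⊗ H) ⊗ (A ⊗ H), and (ε_A ⊗ ε_H) ∘ ζ = ε_H ⊗ ε_A. -/

import Mathlib

/-!
ζ is the composite ξ⁻¹ ∘ μ_X ∘ (j_H ⊗ j_A) of coalgebra morphisms. The multiplication of a
bialgebra is a coalgebra morphism X ⊗ X → X, hence so is ξ = μ_X ∘ (j_A ⊗ j_H); being bijective,
its inverse is a coalgebra morphism as well.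
-/

open TensorProduct

noncomputable section

universe u

variable {k A H X : Type u} [Field k]
  [Ring A] [Ring H] [Ring X]
  [Bialgebra k A] [Bialgebra k H] [Bialgebra k X]

/-- ζ : H ⊗ A → A ⊗ H, ζ(h ⊗ a) = ξ⁻¹(j_H(h) · j_A(a)). -/
def zetaF (jA : A →ₐc[k] X) (jH : H →ₐc[k] X) (ξ : (A ⊗[k] H) ≃ₗ[k] X) :
    H ⊗[k] A →ₗ[k] A ⊗[k] H :=
  ξ.symm.toLinearMap ∘ₗ LinearMap.mul' k X ∘ₗ
    TensorProduct.map (jH : H →ₗ[k] X) (jA : A →ₗ[k] X)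

/-- Unlike `CoalgEquiv.ofBijective`, this keeps `e` as the underlying linear equivalence, so the
inverse is `e.symm` by definition. -/
def LinearEquiv.toCoalgEquivOfEq {R C D : Type*} [CommSemiring R]
    [AddCommMonoid C] [Module R C] [CoalgebraStruct R C]
    [AddCommMonoid D] [Module R D] [CoalgebraStruct R D]
    (e : C ≃ₗ[R] D) (f : C →ₗc[R] D) (h : (f : C →ₗ[R] D) = e) : C ≃ₗc[R] D :=
  { e with
    counit_comp := h ▸ f.counit_comp
    map_comp_comul := h ▸ f.map_comp_comul }

section

variable (jA : A →ₐc[k] X) (jH : H →ₐc[k] X) (ξ : (A ⊗[k] H) ≃ₗ[k] X)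
  (hξ : ∀ (a : A) (h : H), ξ (a ⊗ₜ[k] h) = jA a * jH h)

def xiCoalgEquiv : A ⊗[k] H ≃ₗc[k] X :=
  ξ.toCoalgEquivOfEq
    ((Bialgebra.mulCoalgHom k X).comp (Coalgebra.TensorProduct.map (jA : A →ₗc[k] X) jH))
    (by ext a h; simp [hξ])

def zetaCoalgHom : H ⊗[k] A →ₗc[k] A ⊗[k] H :=
  (xiCoalgEquiv jA jH ξ hξ).symm.toCoalgHom.comp
    ((Bialgebra.mulCoalgHom k X).comp (Coalgebra.TensorProduct.map (jH : H →ₗc[k] X) jA))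

theorem toLinearMap_zetaCoalgHom :
    (zetaCoalgHom jA jH ξ hξ : H ⊗[k] A →ₗ[k] A ⊗[k] H) = zetaF jA jH ξ :=
  rfl

end

theorem zeta_coalgebra_morphism (jA : A →ₐc[k] X) (jH : H →ₐc[k] X)
    (ξ : (A ⊗[k] H) ≃ₗ[k] X)
    (hξ : ∀ (a : A) (h : H), ξ (a ⊗ₜ[k] h) = jA a * jH h) :
    (Coalgebra.comul : A ⊗[k] H →ₗ[k] (A ⊗[k] H) ⊗[k] (A ⊗[k] H)) ∘ₗ zetaF jA jH ξ
      = TensorProduct.map (zetaF jA jH ξ) (zetaF jA jH ξ) ∘ₗ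
          (Coalgebra.comul : H ⊗[k] A →ₗ[k] (H ⊗[k] A) ⊗[k] (H ⊗[k] A)) ∧
    (Coalgebra.counit : A ⊗[k] H →ₗ[k] k) ∘ₗ zetaF jA jH ξ
      = (Coalgebra.counit : H ⊗[k] A →ₗ[k] k) := by
  rw [← toLinearMap_zetaCoalgHom jA jH ξ hξ]
  exact ⟨(zetaCoalgHom jA jH ξ hξ).map_comp_comul.symm, (zetaCoalgHom jA jH ξ hξ).counit_comp⟩
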